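/- arXiv:2601.16744 — 2 statements merged into one kernel-verified Lean document; each statement's English description precedes it below -/
import Mathlib

section
/- LU-trick well-definedness: if Q ∈ ℝ^{M×M} is such that Q^T admits an LU decomposition Q^T = LU with L unit lower-triangular and U upper-triangular invertible, then Q_Δ^{LU} := U^T is lower-triangular and invertible, and Q (Q_Δ^{LU})^{-1} = L^T is upper-triangular with unit diagonal; consequently the stiff-limit matrix I_M − Q_Δ^{-1} Q = I − (L^{-1})^T has zero diagonal and is therefore nilpotent's transpose structure: strictly upper-triangular, hence (I_M − Q_Δ^{-1} Q)^M = 0. -/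
open Matrix

lemma strict_pow_zero (M : ℕ) (N : Matrix (Fin M) (Fin M) ℝ)
    (hN : ∀ i j : Fin M, j ≤ i → N i j = 0) :
    ∀ k : ℕ, ∀ i j : Fin M, (j : ℕ) < (i : ℕ) + k → (N ^ k) i j = 0 := by
  intro k
  induction k with
  | zero =>
      intro i j h
      simp only [pow_zero, Matrix.one_apply]
      have : j ≠ i := by
        intro hji; subst hji; omega
      simp [Matrix.one_apply, Ne.symm this]
  | succ k ih =>
      intro i j h
      rw [pow_succ', Matrix.mul_apply]
      apply Finset.sum_eq_zero
      intro l _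
      by_cases hl : l ≤ i
      · rw [hN i l hl, zero_mul]
      · push_neg at hl
        have hil : (i : ℕ) < (l : ℕ) := hl
        have : (j : ℕ) < (l : ℕ) + k := by omega
        rw [ih l j this, mul_zero]

/-- LU-trick well-definedness. If `Qᵀ = L U` with `L` unit
lower-triangular and `U` invertible upper-triangular, then `Q_Δ^{LU} = Uᵀ` is
lower-triangular and invertible, `(Q_Δ^{LU})⁻¹ Q = Lᵀ` is upper-triangular with
unit diagonal, and the stiff-limit matrix `I − Q_Δ⁻¹ Q` is strictly
upper-triangular (zero diagonal), hence nilpotent: `(I − Q_Δ⁻¹ Q)^M = 0`. -/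
theorem stmt15 (M : ℕ) (Q L U : Matrix (Fin M) (Fin M) ℝ)
    (hL_lower : ∀ i j : Fin M, i < j → L i j = 0)
    (hL_diag : ∀ i : Fin M, L i i = 1)
    (hU_upper : ∀ i j : Fin M, j < i → U i j = 0)
    (hU_inv : IsUnit U.det)
    (hLU : Qᵀ = L * U) :
    (∀ i j : Fin M, i < j → Uᵀ i j = 0) ∧
    IsUnit (Uᵀ).det ∧
    (Uᵀ)⁻¹ * Q = Lᵀ ∧
    (∀ i j : Fin M, j < i → Lᵀ i j = 0) ∧
    (∀ i : Fin M, Lᵀ i i = 1) ∧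
    (∀ i j : Fin M, j ≤ i →
      ((1 : Matrix (Fin M) (Fin M) ℝ) - (Uᵀ)⁻¹ * Q) i j = 0) ∧
    ((1 : Matrix (Fin M) (Fin M) ℝ) - (Uᵀ)⁻¹ * Q) ^ M = 0 := by
  have hUt_inv : IsUnit (Uᵀ).det := by rwa [Matrix.det_transpose]
  have hQ : Q = Uᵀ * Lᵀ := by
    have := congrArg Matrix.transpose hLU
    simpa [Matrix.transpose_mul] using this
  have hmain : (Uᵀ)⁻¹ * Q = Lᵀ := by
    rw [hQ, ← Matrix.mul_assoc, Matrix.nonsing_inv_mul _ hUt_inv, Matrix.one_mul]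
  have hdiag : ∀ i j : Fin M, j ≤ i →
      ((1 : Matrix (Fin M) (Fin M) ℝ) - (Uᵀ)⁻¹ * Q) i j = 0 := by
    intro i j hji
    rw [hmain, Matrix.sub_apply, Matrix.transpose_apply, Matrix.one_apply]
    rcases lt_or_eq_of_le hji with h | h
    · rw [hL_lower j i h, if_neg (by intro he; subst he; exact lt_irrefl _ h)]
      ring
    · subst h; rw [hL_diag, if_pos rfl]; ring
  refine ⟨fun i j h => hU_upper j i h, hUt_inv, hmain,
    fun i j h => hL_lower j i h, fun i => hL_diag i, hdiag, ?_⟩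
  ext i j
  rw [strict_pow_zero M _ hdiag M i j (by omega)]
  simp
end

section
/- One SDC sweep gains one order per iteration for a scalar linear ODE: for u' = λu on [t_0, t_0+Δt] with collocation matrix Q and preconditioner Q_Δ whose entries are all O(Δt·|entries of reference matrices|), if the iterate u^k satisfies max_m |u(τ_m) − u_m^k| ≤ C Δt^{k+1} and the quadrature error satisfies max_m |∫_{t_0}^{τ_m} λ u(s) ds − Σ_j q_{m,j} λ u(τ_j)| ≤ C' Δt^{M+1}, then the next iterate u^{k+1} defined by u_m^{k+1} = u_0 + Σ_{j≤m} q̃_{m,j} λ(u_j^{k+1} − u_j^k) + Σ_j q_{m,j} λ u_j^k satisfies max_m |u(τ_m) − u_m^{k+1}| ≤ C'' Δt^{min(k+2, M+1)} for Δt sufficiently small. -/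
open Set intervalIntegral Finset

/-!
Subtracting the sweep from the collocation identity `u(τ_m) = u₀ + ∫_{t₀}^{τ_m} λ u`, the new
error at node `m` is the quadrature defect `O(Δt^{M+1})`, plus the explicit term
`Σ_j q_{m,j} λ e^k_j = O(Δt^{k+2})`, plus a lower-triangular `O(Δt)` combination of the new errors
`e^{k+1}_j`, `j ≤ m`. Once `c |λ| Δt ≤ 1/2` the diagonal term is absorbed, and a discrete Gronwall
inequality over the `M` nodes bounds `|e^{k+1}_m|` by `2^{M+1}` times the sum of the first two terms.
-/

theorem integral_mul_eq_sub_of_eq_mul_exp {lam u0 t0 : ℝ} {u : ℝ → ℝ}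
    (hu : ∀ t, u t = u0 * Real.exp (lam * (t - t0))) (t : ℝ) :
    ∫ s in t0..t, lam * u s = u t - u0 := by
  obtain rfl : u = fun t => u0 * Real.exp (lam * (t - t0)) := funext hu
  have hderiv (s : ℝ) : HasDerivAt (fun t => u0 * Real.exp (lam * (t - t0)))
      (lam * (u0 * Real.exp (lam * (s - t0)))) s := by
    refine ((((hasDerivAt_id s).sub_const t0).const_mul lam).exp.const_mul u0).congr_deriv ?_
    simp only [id, mul_one]
    ring
  rw [integral_eq_sub_of_hasDerivAt (fun s _ => hderiv s)
    (Continuous.intervalIntegrable (by fun_prop) _ _)]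
  simp

theorem abs_sum_mul_le_mul_sum_abs {ι R : Type*} [Ring R] [LinearOrder R] [IsStrictOrderedRing R]
    {s : Finset ι} {w x : ι → R} {ρ : R}
    (hw : ∀ j ∈ s, |w j| ≤ ρ) : |∑ j ∈ s, w j * x j| ≤ ρ * ∑ j ∈ s, |x j| := by
  rw [mul_sum]
  refine (abs_sum_le_sum_abs _ _).trans (sum_le_sum fun j hj => ?_)
  rw [abs_mul]
  exact mul_le_mul_of_nonneg_right (hw j hj) (abs_nonneg _)

theorem Fin.sum_Iio_eq_sum_range {M : ℕ} {A : Type*} [AddCommMonoid A] (m : Fin M) (f : ℕ → A) :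
    ∑ j ∈ Iio m, f j = ∑ i ∈ range m, f i := by
  rw [← Nat.Iio_eq_range, ← Fin.map_valEmbedding_Iio, sum_map]
  rfl

theorem Fin.le_mul_one_add_pow_of_le_add_mul_sum_Iio {M : ℕ} {R : Type*} [CommRing R] [LinearOrder R]
    [IsStrictOrderedRing R] {e : Fin M → R} {a b : R}
    (hb : 0 ≤ b) (h : ∀ m, e m ≤ a + b * ∑ j ∈ Iio m, e j) (m : Fin M) :
    e m ≤ a * (1 + b) ^ (m : ℕ) := by
  induction m using WellFoundedLT.induction with
  | _ m ih =>
    have hsum : ∑ j ∈ Iio m, e j ≤ ∑ j ∈ Iio m, a * (1 + b) ^ (j : ℕ) :=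
      sum_le_sum fun j hj => ih j (mem_Iio.1 hj)
    have hgeom : b * ∑ j ∈ Iio m, (1 + b) ^ (j : ℕ) = (1 + b) ^ (m : ℕ) - 1 := by
      rw [Fin.sum_Iio_eq_sum_range m ((1 + b) ^ ·), ← geom_sum_mul, add_sub_cancel_left, mul_comm]
    calc e m ≤ a + b * ∑ j ∈ Iio m, e j := h m
      _ ≤ a + b * ∑ j ∈ Iio m, a * (1 + b) ^ (j : ℕ) := by gcongr
      _ = a * (1 + b) ^ (m : ℕ) := by rw [← mul_sum, mul_left_comm, hgeom]; ring

theorem Fin.le_two_mul_mul_one_add_pow_of_le_add_mul_sum_Iic {M : ℕ} {R : Type*} [CommRing R]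
    [LinearOrder R] [IsStrictOrderedRing R] {e : Fin M → R} {a r : R}
    (he : ∀ m, 0 ≤ e m) (hr : 0 ≤ r) (hr2 : 2 * r ≤ 1)
    (h : ∀ m, e m ≤ a + r * ∑ j ∈ Iic m, e j) (m : Fin M) :
    e m ≤ 2 * a * (1 + 2 * r) ^ (m : ℕ) := by
  refine Fin.le_mul_one_add_pow_of_le_add_mul_sum_Iio (by positivity) (fun m => ?_) m
  have hm := h m
  rw [← sum_Iio_add_eq_sum_Iic] at hm
  nlinarith [mul_le_mul_of_nonneg_right hr2 (he m)]

theorem mul_pow_add_mul_pow_le_mul_pow_min {R : Type*} [CommSemiring R] [PartialOrder R]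
    [IsOrderedRing R] {x a b : R} (hx₀ : 0 ≤ x) (hx₁ : x ≤ 1) (ha : 0 ≤ a) (hb : 0 ≤ b) (p q : ℕ) :
    a * x ^ p + b * x ^ q ≤ (a + b) * x ^ min p q := by
  rw [add_mul]
  exact add_le_add (mul_le_mul_of_nonneg_left (pow_le_pow_of_le_one hx₀ hx₁ (min_le_left p q)) ha)
    (mul_le_mul_of_nonneg_left (pow_le_pow_of_le_one hx₀ hx₁ (min_le_right p q)) hb)

def IsSDCSweep {M : ℕ} (lam u0 : ℝ) (q qt : Fin M → Fin M → ℝ) (uk uk1 : Fin M → ℝ) : Prop :=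
  ∀ m, uk1 m = u0 + ∑ j ∈ Iic m, qt m j * (lam * (uk1 j - uk j)) + ∑ j, q m j * (lam * uk j)

namespace IsSDCSweep

variable {M : ℕ} {lam u0 : ℝ} {q qt : Fin M → Fin M → ℝ} {uk uk1 : Fin M → ℝ}

theorem sub_eq (h : IsSDCSweep lam u0 q qt uk uk1) (U : Fin M → ℝ) (m : Fin M) :
    U m - uk1 m = (U m - u0 - ∑ j, q m j * (lam * U j)) + ∑ j, q m j * (lam * (U j - uk j)) +
      ∑ j ∈ Iic m, qt m j * (lam * ((U j - uk1 j) - (U j - uk j))) := by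
  rw [h m]
  simp only [mul_sub, sum_sub_distrib]
  ring

theorem abs_sub_le (h : IsSDCSweep lam u0 q qt uk uk1) {U : Fin M → ℝ} {d ρ η : ℝ}
    (hq : ∀ m j, |q m j| ≤ ρ) (hqt : ∀ m j, |qt m j| ≤ ρ)
    (hd : ∀ m, |U m - u0 - ∑ j, q m j * (lam * U j)| ≤ d) (hη : ∀ j, |U j - uk j| ≤ η)
    (m : Fin M) :
    |U m - uk1 m| ≤ d + 2 * M * (ρ * |lam| * η) + ρ * |lam| * ∑ j ∈ Iic m, |U j - uk1 j| := by
  have hρ : 0 ≤ ρ := (abs_nonneg _).trans (hq m m)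
  have hη0 : 0 ≤ η := (abs_nonneg _).trans (hη m)
  have hcard (s : Finset (Fin M)) : (#s : ℝ) ≤ M := by
    exact_mod_cast (card_le_univ s).trans_eq (Fintype.card_fin M)
  have hexplicit : |∑ j, q m j * (lam * (U j - uk j))| ≤ M * (ρ * |lam| * η) := by
    refine (abs_sum_mul_le_mul_sum_abs fun j _ => hq m j).trans ?_
    have : ∑ j, |lam * (U j - uk j)| ≤ M * (|lam| * η) := by
      refine (sum_le_card_nsmul _ _ (|lam| * η) fun j _ => ?_).trans ?_
      · rw [abs_mul]; exact mul_le_mul_of_nonneg_left (hη j) (abs_nonneg lam)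
      · simp
    nlinarith
  have himplicit : |∑ j ∈ Iic m, qt m j * (lam * ((U j - uk1 j) - (U j - uk j)))| ≤
      ρ * |lam| * ∑ j ∈ Iic m, |U j - uk1 j| + M * (ρ * |lam| * η) := by
    refine (abs_sum_mul_le_mul_sum_abs fun j _ => hqt m j).trans ?_
    have : ∑ j ∈ Iic m, |lam * ((U j - uk1 j) - (U j - uk j))| ≤
        |lam| * ∑ j ∈ Iic m, |U j - uk1 j| + M * (|lam| * η) := by
      calc _ ≤ ∑ j ∈ Iic m, (|lam| * |U j - uk1 j| + |lam| * η) := by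
            refine sum_le_sum fun j _ => ?_
            rw [abs_mul, ← mul_add]
            gcongr
            exact (abs_sub _ _).trans (by gcongr; exact hη j)
        _ ≤ _ := by
            rw [sum_add_distrib, ← mul_sum, sum_const, nsmul_eq_mul]
            have := hcard (Iic m)
            gcongr
    nlinarith
  rw [h.sub_eq U m]
  have hdm := hd m
  have := abs_add_three (U m - u0 - ∑ j, q m j * (lam * U j)) (∑ j, q m j * (lam * (U j - uk j)))
    (∑ j ∈ Iic m, qt m j * (lam * ((U j - uk1 j) - (U j - uk j))))
  linarith

end IsSDCSweep

/-- one SDC sweep gains one order per iteration for the scalar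
linear ODE `u' = λ u`: if the iterate `u^k` is accurate of order `k+1` and the
spectral quadrature error is of order `M+1`, then the next iterate `u^{k+1}` is
accurate of order `min (k+2) (M+1)`, for `Δt` sufficiently small. -/
theorem stmt16 (M k : ℕ) (lam u0 t0 : ℝ) (u : ℝ → ℝ)
    (hu : ∀ t, u t = u0 * Real.exp (lam * (t - t0)))
    (c C C' : ℝ) (hc : 0 < c) (hC : 0 < C) (hC' : 0 < C') :
    ∃ C'' > (0 : ℝ), ∃ δ > (0 : ℝ), ∀ Δt : ℝ, 0 < Δt → Δt < δ →
      ∀ (τ : Fin M → ℝ) (q qt : Fin M → Fin M → ℝ) (uk uk1 : Fin M → ℝ),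
        StrictMono τ →
        (∀ m, τ m ∈ Icc t0 (t0 + Δt)) →
        -- quadrature weights and preconditioner entries are O(Δt)
        (∀ m j, |q m j| ≤ c * Δt) →
        (∀ m j, |qt m j| ≤ c * Δt) →
        -- the quadrature rule is exact to order M (error O(Δt^{M+1}))
        (∀ m, |(∫ s in t0..(τ m), lam * u s) -
            ∑ j, q m j * (lam * u (τ j))| ≤ C' * Δt ^ (M + 1)) →
        -- current iterate is accurate of order k+1
        (∀ m, |u (τ m) - uk m| ≤ C * Δt ^ (k + 1)) →
        -- SDC sweep (lower-triangular correction)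
        (∀ m, uk1 m = u0 +
            (∑ j ∈ Finset.univ.filter (fun j : Fin M => j ≤ m),
              qt m j * (lam * (uk1 j - uk j))) +
            ∑ j, q m j * (lam * uk j)) →
        ∀ m, |u (τ m) - uk1 m| ≤ C'' * Δt ^ (min (k + 2) (M + 1)) := by
  refine ⟨2 ^ (M + 1) * (C' + 2 * M * c * |lam| * C), by positivity,
    min 1 (1 / (2 * c * |lam| + 1)), by positivity, ?_⟩
  intro Δt hΔ hΔδ τ q qt uk uk1 _ _ hq hqt hquad hk hsweep m
  have hΔ1 : Δt ≤ 1 := (hΔδ.trans_le (min_le_left _ _)).le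
  have hr : 2 * (c * Δt * |lam|) ≤ 1 := by
    have := (lt_div_iff₀ (by positivity)).1 (hΔδ.trans_le (min_le_right _ _))
    nlinarith
  have hsweep' : IsSDCSweep lam u0 q qt uk uk1 := fun m => by rw [hsweep m, filter_ge_eq_Iic]
  have hdefect (m : Fin M) :
      |u (τ m) - u0 - ∑ j, q m j * (lam * u (τ j))| ≤ C' * Δt ^ (M + 1) := by
    simpa only [integral_mul_eq_sub_of_eq_mul_exp hu] using hquad m
  have herr := Fin.le_two_mul_mul_one_add_pow_of_le_add_mul_sum_Iic (fun m => abs_nonneg _)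
    (by positivity) hr (hsweep'.abs_sub_le hq hqt hdefect hk) m
  calc |u (τ m) - uk1 m|
      ≤ 2 * (C' * Δt ^ (M + 1) + 2 * M * (c * Δt * |lam| * (C * Δt ^ (k + 1)))) *
          (1 + 2 * (c * Δt * |lam|)) ^ (m : ℕ) := herr
    _ ≤ 2 * (C' * Δt ^ (M + 1) + 2 * M * (c * Δt * |lam| * (C * Δt ^ (k + 1)))) * 2 ^ M := by
        gcongr
        exact (pow_le_pow_left₀ (by positivity) (by linarith) _).trans
          (pow_le_pow_right₀ one_le_two m.isLt.le)
    _ = 2 ^ (M + 1) * ((2 * M * c * |lam| * C) * Δt ^ (k + 2) + C' * Δt ^ (M + 1)) := by ring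
    _ ≤ 2 ^ (M + 1) * ((2 * M * c * |lam| * C + C') * Δt ^ min (k + 2) (M + 1)) := by
        gcongr
        exact mul_pow_add_mul_pow_le_mul_pow_min hΔ.le hΔ1 (by positivity) hC'.le _ _
    _ = _ := by ring
end
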